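/- For a bounded open set D ⊂ ℝ^d and a symmetric kernel k(x,y) = j(|x−y|) with j : (0,∞) → (0,∞) non-increasing, there exists a constant c > 0 such that for every u ∈ L²(ℝ^d) with u = 0 a.e. on D^c, one has ∫_D u(x)² dx ≤ c⁻¹ · Ê(u,u), where Ê(u,u) = (1/2)∬_{(ℝ^d×ℝ^d)∖(D^c×D^c)} (u(x)−u(y))² k(x,y) dy dx. In particular c can be taken as inf over x ∈ D of ∫_{B(x, diam D)^c} j(|x−y|) dy, which is positive. -/

import Mathlib

open MeasureTheory Set
open scoped ENNReal

noncomputable section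

abbrev Euc (d : ℕ) := EuclideanSpace ℝ (Fin d)

/-!
For `x ∈ D` every jump from `x` into `Dᶜ` changes `u` by exactly `u x`, so the part of the
energy carried by `D ×ˢ Dᶜ` (which, by symmetry of the kernel, is at most half of the whole
energy) dominates `∫_D u(x)² κ_D(x) dx`, where `κ_D(x) = ∫_{Dᶜ} k(x, y) dy`. A uniform lower
bound on `κ_D` over `D` comes from a unit ball at distance between `diam D + 1` and `diam D + 3`
from `x`: it lies in `Dᶜ`, and `j` is at least `j (diam D + 3)` on it.
-/

namespace Nonlocal

variable {α : Type*} [MeasurableSpace α] {μ : Measure α}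

/-- The form `Ê(u, u)` for a general kernel `k`. -/
def energy (μ : Measure α) (D : Set α) (k : α → α → ℝ) (u : α → ℝ) : ℝ≥0∞ :=
  (1 / 2 : ℝ≥0∞) * ∫⁻ p in (univ : Set (α × α)) \ (Dᶜ ×ˢ Dᶜ),
    ENNReal.ofReal ((u p.1 - u p.2) ^ 2 * k p.1 p.2) ∂μ.prod μ

theorem two_mul_setLIntegral_prod_compl_le [SFinite μ] {D : Set α} (hD : MeasurableSet D)
    {f : α × α → ℝ≥0∞} (hf : ∀ x y, f (x, y) = f (y, x)) :
    2 * ∫⁻ p in D ×ˢ Dᶜ, f p ∂μ.prod μ ≤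
      ∫⁻ p in (univ : Set (α × α)) \ (Dᶜ ×ˢ Dᶜ), f p ∂μ.prod μ := by
  have hswap : ∫⁻ p in Dᶜ ×ˢ D, f p ∂μ.prod μ = ∫⁻ p in D ×ˢ Dᶜ, f p ∂μ.prod μ := by
    rw [← (Measure.measurePreserving_swap (μ := μ) (ν := μ)).setLIntegral_comp_preimage_emb
      MeasurableEquiv.prodComm.measurableEmbedding, preimage_swap_prod]
    exact setLIntegral_congr_fun (hD.prod hD.compl) fun p _ => (hf p.1 p.2).symm
  have hdisj : Disjoint (D ×ˢ Dᶜ) (Dᶜ ×ˢ D) :=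
    disjoint_left.mpr fun p hp hp' => hp'.1 hp.1
  have hsub : D ×ˢ Dᶜ ∪ Dᶜ ×ˢ D ⊆ (univ : Set (α × α)) \ (Dᶜ ×ˢ Dᶜ) := by
    rintro p (hp | hp)
    · exact ⟨mem_univ p, fun h => h.1 hp.1⟩
    · exact ⟨mem_univ p, fun h => h.2 hp.2⟩
  calc 2 * ∫⁻ p in D ×ˢ Dᶜ, f p ∂μ.prod μ
      = ∫⁻ p in D ×ˢ Dᶜ ∪ Dᶜ ×ˢ D, f p ∂μ.prod μ := by
        rw [lintegral_union (hD.compl.prod hD) hdisj, hswap, two_mul]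
    _ ≤ _ := lintegral_mono_set hsub

theorem setLIntegral_compl_sq_sub_mul {D : Set α} (hD : MeasurableSet D) {k : α → α → ℝ}
    {u : α → ℝ} (hu0 : ∀ᵐ y ∂μ, y ∈ Dᶜ → u y = 0) (x : α) :
    ∫⁻ y in Dᶜ, ENNReal.ofReal ((u x - u y) ^ 2 * k x y) ∂μ =
      ENNReal.ofReal (u x ^ 2) * ∫⁻ y in Dᶜ, ENNReal.ofReal (k x y) ∂μ := by
  rw [← lintegral_const_mul' _ _ ENNReal.ofReal_ne_top]
  refine setLIntegral_congr_fun_ae hD.compl ?_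
  filter_upwards [hu0] with y hy hyD
  rw [hy hyD, sub_zero, ENNReal.ofReal_mul (sq_nonneg _)]

theorem mul_setLIntegral_sq_le_energy [SFinite μ] {D : Set α} (hD : MeasurableSet D)
    {k : α → α → ℝ} (hk : ∀ x y, k x y = k y x) (hkm : Measurable (Function.uncurry k))
    {u : α → ℝ} (hu : Measurable u) (hu0 : ∀ᵐ y ∂μ, y ∈ Dᶜ → u y = 0) {c : ℝ≥0∞}
    (hc : ∀ x ∈ D, c ≤ ∫⁻ y in Dᶜ, ENNReal.ofReal (k x y) ∂μ) :
    c * ∫⁻ x in D, ENNReal.ofReal (u x ^ 2) ∂μ ≤ energy μ D k u := by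
  set f : α × α → ℝ≥0∞ := fun p => ENNReal.ofReal ((u p.1 - u p.2) ^ 2 * k p.1 p.2)
  have hfm : Measurable f :=
    ENNReal.measurable_ofReal.comp
      ((((hu.comp measurable_fst).sub (hu.comp measurable_snd)).pow_const 2).mul hkm)
  have hf : ∀ x y, f (x, y) = f (y, x) := fun x y => by
    simp only [f, hk x y, ← neg_sub (u x), neg_sq]
  calc c * ∫⁻ x in D, ENNReal.ofReal (u x ^ 2) ∂μ
      ≤ ∫⁻ x in D, ENNReal.ofReal (u x ^ 2) * ∫⁻ y in Dᶜ, ENNReal.ofReal (k x y) ∂μ ∂μ := by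
        rw [mul_comm c]
        refine (lintegral_mul_const_le _ _).trans (setLIntegral_mono' hD fun x hx => ?_)
        gcongr
        exact hc x hx
    _ = ∫⁻ p in D ×ˢ Dᶜ, f p ∂μ.prod μ := by
        rw [setLIntegral_prod f hfm.aemeasurable]
        simp only [f, setLIntegral_compl_sq_sub_mul hD hu0]
    _ = (1 / 2 : ℝ≥0∞) * (2 * ∫⁻ p in D ×ˢ Dᶜ, f p ∂μ.prod μ) := by
        rw [← mul_assoc, one_div, ENNReal.inv_mul_cancel two_ne_zero ENNReal.ofNat_ne_top,
          one_mul]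
    _ ≤ energy μ D k u := by
        rw [energy]
        gcongr
        exact two_mul_setLIntegral_prod_compl_le hD hf

end Nonlocal

section Euclidean

variable {E : Type*} [NormedAddCommGroup E] [NormedSpace ℝ E] [MeasurableSpace E]
  [BorelSpace E] {μ : Measure E} [μ.IsAddHaarMeasure]

theorem ofReal_mul_measure_ball_le_setLIntegral_compl_closedBall [Nontrivial E] {j : ℝ → ℝ}
    (hj : AntitoneOn j (Ioi 0)) (x : E) {r : ℝ} (hr : 0 ≤ r) :
    ENNReal.ofReal (j (r + 3)) * μ (Metric.ball 0 1) ≤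
      ∫⁻ y in (Metric.closedBall x (r + 1))ᶜ, ENNReal.ofReal (j (dist x y)) ∂μ := by
  obtain ⟨p, hp⟩ := exists_norm_eq E (by linarith : 0 ≤ r + 2)
  have hdist : ∀ y ∈ Metric.ball (x + p) 1, r + 1 < dist x y ∧ dist x y ≤ r + 3 := by
    intro y hy
    have hxp : dist x (x + p) = r + 2 := by rw [dist_self_add_right, hp]
    rw [Metric.mem_ball] at hy
    constructor
    · linarith [dist_triangle x y (x + p)]
    · linarith [dist_triangle x (x + p) y, dist_comm y (x + p)]
  calc ENNReal.ofReal (j (r + 3)) * μ (Metric.ball 0 1)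
      = ∫⁻ _ in Metric.ball (x + p) 1, ENNReal.ofReal (j (r + 3)) ∂μ := by
        rw [setLIntegral_const, Measure.addHaar_ball_center μ (x + p), mul_comm]
    _ ≤ ∫⁻ y in Metric.ball (x + p) 1, ENNReal.ofReal (j (dist x y)) ∂μ := by
        refine setLIntegral_mono' measurableSet_ball fun y hy => ENNReal.ofReal_le_ofReal ?_
        obtain ⟨hlo, hhi⟩ := hdist y hy
        exact hj (mem_Ioi.mpr (by linarith)) (mem_Ioi.mpr (by linarith)) hhi
    _ ≤ _ := lintegral_mono_set fun y hy => by
        simpa only [mem_compl_iff, Metric.mem_closedBall, not_le, dist_comm y]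
          using (hdist y hy).1

end Euclidean

theorem statement0 (d : ℕ) (hd : 2 ≤ d)
    (D : Set (Euc d)) (hDopen : IsOpen D) (hDbdd : Bornology.IsBounded D)
    (j : ℝ → ℝ) (hjpos : ∀ r : ℝ, 0 < r → 0 < j r)
    (hjmono : ∀ r s : ℝ, 0 < r → r ≤ s → j s ≤ j r)
    (hjmeas : Measurable j) :
    ∃ c : ℝ, 0 < c ∧
      (∀ x ∈ D,
        ENNReal.ofReal c ≤ ∫⁻ y in (Metric.ball x (Metric.diam D))ᶜ,
          ENNReal.ofReal (j (dist x y))) ∧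
      ∀ u : Euc d → ℝ, Measurable u → MemLp u 2 (volume : Measure (Euc d)) →
        (∀ᵐ x ∂(volume : Measure (Euc d)), x ∈ Dᶜ → u x = 0) →
        ∫⁻ x in D, ENNReal.ofReal (u x ^ 2) ≤
          ENNReal.ofReal c⁻¹ *
            ((1 / 2 : ℝ≥0∞) * ∫⁻ p in ((univ : Set (Euc d × Euc d)) \ (Dᶜ ×ˢ Dᶜ)),
              ENNReal.ofReal ((u p.1 - u p.2) ^ 2 * j (dist p.1 p.2))) := by
  have : Nontrivial (Euc d) :=
    Module.nontrivial_of_finrank_pos (R := ℝ) (by rw [finrank_euclideanSpace_fin]; omega)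
  set R := Metric.diam D
  have hR : 0 ≤ R := Metric.diam_nonneg
  have hball_pos : 0 < volume (Metric.ball (0 : Euc d) 1) := Metric.measure_ball_pos _ _ one_pos
  set c := j (R + 3) * (volume (Metric.ball (0 : Euc d) 1)).toReal
  have hc : 0 < c :=
    mul_pos (hjpos _ (by linarith)) (ENNReal.toReal_pos hball_pos.ne' measure_ball_lt_top.ne)
  have hlow : ∀ x, ENNReal.ofReal c ≤
      ∫⁻ y in (Metric.closedBall x (R + 1))ᶜ, ENNReal.ofReal (j (dist x y)) := fun x => by
    rw [ENNReal.ofReal_mul (hjpos _ (by linarith)).le,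
      ENNReal.ofReal_toReal measure_ball_lt_top.ne]
    exact ofReal_mul_measure_ball_le_setLIntegral_compl_closedBall
      (fun r hr s _ hrs => hjmono r s hr hrs) x hR
  have hfar : ∀ x ∈ D, (Metric.closedBall x (R + 1))ᶜ ⊆ Dᶜ := fun x hx y hy hyD =>
    hy (Metric.mem_closedBall.mpr (by linarith [Metric.dist_le_diam_of_mem hDbdd hyD hx]))
  refine ⟨c, hc, fun x _ => (hlow x).trans (lintegral_mono_set ?_), fun u hu _ hu0 => ?_⟩
  · exact compl_subset_compl.mpr (Metric.ball_subset_closedBall.trans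
      (Metric.closedBall_subset_closedBall (by linarith)))
  have hc' : ENNReal.ofReal c ≠ 0 := (ENNReal.ofReal_pos.mpr hc).ne'
  rw [ENNReal.ofReal_inv_of_pos hc, ← ENNReal.div_eq_inv_mul,
    ENNReal.le_div_iff_mul_le (Or.inl hc') (Or.inl ENNReal.ofReal_ne_top), mul_comm]
  exact Nonlocal.mul_setLIntegral_sq_le_energy (k := fun x y => j (dist x y))
    hDopen.measurableSet (fun x y => by rw [dist_comm]) (hjmeas.comp measurable_dist) hu hu0
    fun x hx => (hlow x).trans (lintegral_mono_set (hfar x hx))
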